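/- Let R = ⊕_{p≥0} R_p be a commutative ℕ-graded ring, F^aR := ⊕_{p≤a} R_p, and let y₁,…,yₙ ∈ R with yᵢ = xᵢ + (element of F^{kᵢ−1}R), where xᵢ ∈ R_{kᵢ} is homogeneous of degree kᵢ. Assume x₁,…,xₙ is an R-regular sequence in every order. Fix 1 ≤ l ≤ n, let q_l : R → R/(y₁,…,y_l) be the quotient map, and set F^aR_l := q_l(F^aR). Then for every a ∈ ℤ, the additive map R_a → F^aR_l / F^{a−1}R_l induced by q_l (sending x ∈ R_a to the class of q_l(x)) is surjective with kernel R_a ∩ (x₁,…,x_l); in particular it induces an isomorphism of additive groups R_a/(R_a ∩ (x₁,…,x_l)) ≅ F^aR_l / F^{a−1}R_l. -/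

import Mathlib

/-- A sequence (given as a list) `a₁, …, aₙ` in a commutative ring `A` is `A`-regular if for
each `i`, `aᵢ` is not a zero divisor on `A ⧸ (a₁, …, a_{i-1})`. -/
def IsRegularSeq {A : Type*} [CommRing A] (l : List A) : Prop :=
  ∀ (i : ℕ) (h : i < l.length), ∀ x : A,
    l.get ⟨i, h⟩ * x ∈ Ideal.span {y | y ∈ l.take i} →
      x ∈ Ideal.span {y | y ∈ l.take i}

/-- `Fmem 𝒜 a r` says that `r ∈ F^aR = ⊕_{p ≤ a} R_p`: all homogeneous components of `r`
of degree `> a` vanish. -/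
def Fmem {R : Type*} [CommRing R] (𝒜 : ℕ → AddSubgroup R) [GradedRing 𝒜] (a : ℤ)
    (r : R) : Prop :=
  ∀ p : ℕ, a < (p : ℤ) → (DirectSum.decompose 𝒜 r p : R) = 0

/-!
Surjectivity is immediate: the degree-`a` component of `z ∈ F^a R` is the required `w`.
For the kernel, write `w - z' = ∑ bᵢ yᵢ`. If some `bᵢ` has degree above `a - kᵢ`, let `N > a` be
the largest value of `deg bᵢ + kᵢ`; since the leading forms of the `yᵢ` are the `xᵢ`, the
degree-`(N - kᵢ)` parts `cᵢ` of the `bᵢ` satisfy `∑ cᵢ xᵢ = 0`. As the `xᵢ` form a regular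
sequence, this syzygy is Koszul: `c = (e - eᵀ) x` with `e` homogeneous. Replacing `b` by
`b - (e - eᵀ) y` keeps `∑ bᵢ yᵢ`, because `y ⬝ (e - eᵀ) y = 0`, and lowers `N`. Once every `bᵢ`
has degree at most `a - kᵢ`, the degree-`a` component gives `w = ∑ (bᵢ)_{a - kᵢ} xᵢ`.
-/

open DirectSum Matrix

section Filtration

variable {R : Type*} [CommRing R] (𝒜 : ℕ → AddSubgroup R) [GradedRing 𝒜]

def degreeLE (a : ℤ) : AddSubgroup R where
  carrier := {r | Fmem 𝒜 a r}
  zero_mem' _ _ := by simp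
  add_mem' hr hs p hp := by simp [hr p hp, hs p hp]
  neg_mem' hr p hp := by
    rw [decompose_neg, DFinsupp.neg_apply, AddSubgroup.coe_neg, hr p hp, neg_zero]

def homogeneousPart (a : ℤ) : R →+ R :=
  if 0 ≤ a then GradedRing.proj 𝒜 a.toNat else 0

variable {𝒜}

theorem degreeLE_mono {a b : ℤ} (hab : a ≤ b) : degreeLE 𝒜 a ≤ degreeLE 𝒜 b :=
  fun _ hr p hp => hr p (hab.trans_lt hp)

theorem mem_degreeLE_of_mem {p : ℕ} {r : R} (hr : r ∈ 𝒜 p) : r ∈ degreeLE 𝒜 p :=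
  fun _ hq => decompose_of_mem_ne 𝒜 hr (by omega)

theorem exists_mem_degreeLE (r : R) : ∃ m : ℕ, r ∈ degreeLE 𝒜 m := by
  classical
  refine ⟨(decompose 𝒜 r).support.sup id, fun p hp => ?_⟩
  have hp : p ∉ (decompose 𝒜 r).support := fun h => by
    have : p ≤ _ := Finset.le_sup (f := id) h
    omega
  simp [DFinsupp.notMem_support_iff.mp hp]

theorem mul_mem_degreeLE_of_mem {m : ℕ} {b : ℤ} {r s : R} (hr : r ∈ 𝒜 m)
    (hs : s ∈ degreeLE 𝒜 b) : r * s ∈ degreeLE 𝒜 (m + b) := by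
  intro p hp
  by_cases hmp : m ≤ p
  · rw [coe_decompose_mul_of_left_mem_of_le 𝒜 hr hmp, hs (p - m) (by omega), mul_zero]
  · exact coe_decompose_mul_of_left_mem_of_not_le 𝒜 hr hmp

theorem mul_mem_degreeLE {a b : ℤ} {r s : R} (hr : r ∈ degreeLE 𝒜 a)
    (hs : s ∈ degreeLE 𝒜 b) : r * s ∈ degreeLE 𝒜 (a + b) := by
  classical
  rw [← sum_support_decompose 𝒜 r, Finset.sum_mul]
  refine AddSubgroup.sum_mem _ fun m hm => ?_
  have hma : (m : ℤ) ≤ a := by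
    by_contra h
    exact DFinsupp.mem_support_iff.mp hm (Subtype.ext (hr m (by omega)))
  exact degreeLE_mono (by omega) (mul_mem_degreeLE_of_mem (SetLike.coe_mem _) hs)

theorem homogeneousPart_natCast (p : ℕ) (r : R) :
    homogeneousPart 𝒜 p r = decompose 𝒜 r p := by
  simp [homogeneousPart]

theorem homogeneousPart_of_neg {a : ℤ} (ha : a < 0) (r : R) : homogeneousPart 𝒜 a r = 0 := by
  simp [homogeneousPart, not_le.mpr ha]

theorem homogeneousPart_natCast_mem (p : ℕ) (r : R) : homogeneousPart 𝒜 p r ∈ 𝒜 p := by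
  rw [homogeneousPart_natCast]
  exact SetLike.coe_mem _

theorem homogeneousPart_of_mem {p : ℕ} {r : R} (hr : r ∈ 𝒜 p) : homogeneousPart 𝒜 p r = r := by
  rw [homogeneousPart_natCast, decompose_of_mem_same 𝒜 hr]

theorem homogeneousPart_mem_degreeLE (a : ℤ) (r : R) : homogeneousPart 𝒜 a r ∈ degreeLE 𝒜 a := by
  obtain ha | ha := lt_or_ge a 0
  · rw [homogeneousPart_of_neg ha]
    exact zero_mem _
  · lift a to ℕ using ha
    exact mem_degreeLE_of_mem (homogeneousPart_natCast_mem a r)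

theorem homogeneousPart_eq_zero_of_mem_degreeLE {a b : ℤ} {r : R} (hr : r ∈ degreeLE 𝒜 b)
    (hba : b < a) : homogeneousPart 𝒜 a r = 0 := by
  obtain ha | ha := lt_or_ge a 0
  · exact homogeneousPart_of_neg ha r
  · lift a to ℕ using ha
    rw [homogeneousPart_natCast]
    exact hr a hba

theorem homogeneousPart_homogeneousPart (a : ℤ) (r : R) :
    homogeneousPart 𝒜 a (homogeneousPart 𝒜 a r) = homogeneousPart 𝒜 a r := by
  obtain ha | ha := lt_or_ge a 0
  · simp only [homogeneousPart_of_neg ha]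
  · lift a to ℕ using ha
    exact homogeneousPart_of_mem (homogeneousPart_natCast_mem a r)

theorem sub_homogeneousPart_mem_degreeLE {a : ℤ} {r : R} (hr : r ∈ degreeLE 𝒜 a) :
    r - homogeneousPart 𝒜 a r ∈ degreeLE 𝒜 (a - 1) := by
  intro p hp
  rw [decompose_sub, DFinsupp.sub_apply, AddSubgroup.coe_sub]
  obtain hpa | rfl : a < p ∨ a = p := by omega
  · rw [hr p hpa, homogeneousPart_mem_degreeLE a r p hpa, sub_zero]
  · rw [homogeneousPart_natCast, decompose_of_mem_same 𝒜 (SetLike.coe_mem _), sub_self]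

theorem homogeneousPart_mul_of_mem {k : ℕ} {x : R} (hx : x ∈ 𝒜 k) (a : ℤ) (r : R) :
    homogeneousPart 𝒜 a (r * x) = homogeneousPart 𝒜 (a - k) r * x := by
  obtain ha | ha := lt_or_ge (a - k) 0
  · rw [homogeneousPart_of_neg ha, zero_mul]
    obtain ha' | ha' := lt_or_ge a 0
    · exact homogeneousPart_of_neg ha' _
    · lift a to ℕ using ha'
      rw [homogeneousPart_natCast]
      exact coe_decompose_mul_of_right_mem_of_not_le 𝒜 hx (by omega)
  · lift a - k to ℕ using ha with p hp
    obtain rfl : a = ((p + k : ℕ) : ℤ) := by omega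
    rw [homogeneousPart_natCast, homogeneousPart_natCast,
      coe_decompose_mul_of_right_mem_of_le 𝒜 hx le_add_self, Nat.add_sub_cancel]

theorem homogeneousPart_mul_of_sub_mem_degreeLE {k : ℕ} {x y b : R} (hx : x ∈ 𝒜 k)
    (hxy : y - x ∈ degreeLE 𝒜 (k - 1)) {a : ℤ} (hb : b ∈ degreeLE 𝒜 (a - k)) :
    homogeneousPart 𝒜 a (b * y) = homogeneousPart 𝒜 (a - k) b * x := by
  have hlower : b * (y - x) ∈ degreeLE 𝒜 (a - 1) :=
    degreeLE_mono (by omega) (mul_mem_degreeLE hb hxy)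
  rw [show b * y = b * x + b * (y - x) by ring, map_add, homogeneousPart_mul_of_mem hx,
    homogeneousPart_eq_zero_of_mem_degreeLE hlower (by omega), add_zero]

end Filtration

section RegularSequence

variable {A : Type*} [CommRing A]

theorem IsRegularSeq.take {L : List A} (hL : IsRegularSeq L) (m : ℕ) :
    IsRegularSeq (L.take m) := by
  intro i hi z
  simp only [List.length_take, lt_min_iff] at hi
  simpa [List.take_take, min_eq_left hi.1.le] using hL i hi.2 z

theorem IsRegularSeq.ofFn_take {n m : ℕ} {x : Fin n → A} (hx : IsRegularSeq (List.ofFn x))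
    (hm : m ≤ n) : IsRegularSeq (List.ofFn (Fin.take m hm x)) := by
  rw [Fin.ofFn_take_eq_take_ofFn]
  exact hx.take m

theorem IsRegularSeq.mem_span_of_last_mul_mem {l : ℕ} {x : Fin (l + 1) → A}
    (hx : IsRegularSeq (List.ofFn x)) {c : A}
    (hc : x (Fin.last l) * c ∈ Ideal.span (Set.range (Fin.init x))) :
    c ∈ Ideal.span (Set.range (Fin.init x)) := by
  have hspan : {y | y ∈ (List.ofFn x).take l} = Set.range (Fin.init x) := by
    ext y
    rw [← Fin.take_eq_init, ← Fin.ofFn_take_eq_take_ofFn]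
    exact List.mem_ofFn' _ y
  have := hx l (by simp) c
  simp only [List.get_ofFn, hspan] at this
  exact this hc

theorem dotProduct_sub_transpose_mulVec_self {ι : Type*} [Fintype ι] (e : Matrix ι ι A)
    (v : ι → A) : v ⬝ᵥ ((e - eᵀ) *ᵥ v) = 0 := by
  rw [sub_mulVec, dotProduct_sub, dotProduct_mulVec, ← mulVec_transpose, dotProduct_comm, sub_self]

theorem IsRegularSeq.exists_eq_sub_transpose_mulVec {l : ℕ} {x c : Fin l → A}
    (hx : IsRegularSeq (List.ofFn x)) (hc : c ⬝ᵥ x = 0) :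
    ∃ e : Matrix (Fin l) (Fin l) A, c = (e - eᵀ) *ᵥ x := by
  induction l with
  | zero => exact ⟨0, funext fun i => i.elim0⟩
  | succ l ih =>
    -- With `x'`, `c'` the first `l` entries of `x`, `c`: regularity gives `c_last = f ⬝ x'`,
    -- so `c' + x_last • f` is a syzygy of `x'`, and `e` extends its `e₀` by the column `-f`.
    rw [dotProduct, Fin.sum_univ_castSucc] at hc
    have hlast : x (Fin.last l) * c (Fin.last l) ∈ Ideal.span (Set.range (Fin.init x)) := by
      refine Ideal.mem_span_range_iff_exists_fun.mpr ⟨-Fin.init c, ?_⟩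
      simp only [Pi.neg_apply, neg_mul, Finset.sum_neg_distrib, Fin.init]
      linear_combination -hc
    obtain ⟨f, hf⟩ := Ideal.mem_span_range_iff_exists_fun.mp (hx.mem_span_of_last_mul_mem hlast)
    have hinit : (Fin.init c + x (Fin.last l) • f) ⬝ᵥ Fin.init x = 0 := by
      rw [add_dotProduct, smul_dotProduct, dotProduct, dotProduct, hf, smul_eq_mul]
      simp only [Fin.init]
      linear_combination hc
    obtain ⟨e₀, he₀⟩ := ih (hx.ofFn_take l.le_succ) hinit
    refine ⟨Matrix.of (Fin.snoc (fun i => Fin.snoc (e₀ i) (-f i)) 0), funext fun i => ?_⟩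
    induction i using Fin.lastCases with
    | last =>
      simpa [mulVec, dotProduct, Fin.sum_univ_castSucc, Fin.init] using hf.symm
    | cast i =>
      have hi := congrFun he₀ i
      rw [Fin.take_eq_init] at hi
      simp only [Pi.add_apply, Pi.smul_apply, smul_eq_mul, mulVec, dotProduct, Matrix.sub_apply,
        transpose_apply, Fin.init] at hi
      simp only [mulVec, dotProduct, Matrix.sub_apply, of_apply, Fin.snoc_castSucc,
        transpose_apply, Fin.sum_univ_castSucc, Fin.snoc_last, Pi.zero_apply, sub_zero, neg_mul]
      linear_combination hi

end RegularSequence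

section GradedSyzygies

variable {R : Type*} [CommRing R] {𝒜 : ℕ → AddSubgroup R} [GradedRing 𝒜]

theorem homogeneousPart_dotProduct_of_mem_degreeLE {ι : Type*} [Fintype ι] {x y b : ι → R}
    {k : ι → ℕ} (hx : ∀ i, x i ∈ 𝒜 (k i)) (hxy : ∀ i, y i - x i ∈ degreeLE 𝒜 (k i - 1)) {N : ℤ}
    (hb : ∀ i, b i ∈ degreeLE 𝒜 (N - k i)) :
    homogeneousPart 𝒜 N (b ⬝ᵥ y) = (fun i => homogeneousPart 𝒜 (N - k i) (b i)) ⬝ᵥ x := by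
  simp only [dotProduct, map_sum]
  exact Finset.sum_congr rfl fun i _ =>
    homogeneousPart_mul_of_sub_mem_degreeLE (hx i) (hxy i) (hb i)

theorem IsRegularSeq.exists_homogeneous_eq_sub_transpose_mulVec {l : ℕ} {x c : Fin l → R}
    {k : Fin l → ℕ} (hx : ∀ i, x i ∈ 𝒜 (k i)) (hreg : IsRegularSeq (List.ofFn x)) {N : ℤ}
    (hc : ∀ i, homogeneousPart 𝒜 (N - k i) (c i) = c i) (hcx : c ⬝ᵥ x = 0) :
    ∃ e : Matrix (Fin l) (Fin l) R,
      (∀ i j, e i j ∈ degreeLE 𝒜 (N - k i - k j)) ∧ c = (e - eᵀ) *ᵥ x := by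
  obtain ⟨e₀, he₀⟩ := hreg.exists_eq_sub_transpose_mulVec hcx
  refine ⟨Matrix.of fun i j => homogeneousPart 𝒜 (N - k i - k j) (e₀ i j),
    fun i j => homogeneousPart_mem_degreeLE _ _, funext fun i => ?_⟩
  rw [← hc i, he₀]
  simp only [mulVec, dotProduct, map_sum]
  refine Finset.sum_congr rfl fun j _ => ?_
  rw [homogeneousPart_mul_of_mem (hx j), Matrix.sub_apply, Matrix.sub_apply, transpose_apply,
    transpose_apply, of_apply, of_apply, map_sub, sub_right_comm (N : ℤ) (k j : ℤ)]

theorem exists_lower_degree_dotProduct_eq {l : ℕ} {x y : Fin l → R} {k : Fin l → ℕ}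
    (hx : ∀ i, x i ∈ 𝒜 (k i)) (hxy : ∀ i, y i - x i ∈ degreeLE 𝒜 (k i - 1))
    (hreg : IsRegularSeq (List.ofFn x)) {a N : ℤ} {s : R} (hs : s ∈ degreeLE 𝒜 a) (haN : a < N)
    {b : Fin l → R} (hb : ∀ i, b i ∈ degreeLE 𝒜 (N - k i)) (hbs : b ⬝ᵥ y = s) :
    ∃ b' : Fin l → R, (∀ i, b' i ∈ degreeLE 𝒜 (N - 1 - k i)) ∧ b' ⬝ᵥ y = s := by
  set c : Fin l → R := fun i => homogeneousPart 𝒜 (N - k i) (b i)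
  have hcx : c ⬝ᵥ x = 0 := by
    rw [← homogeneousPart_dotProduct_of_mem_degreeLE hx hxy hb, hbs,
      homogeneousPart_eq_zero_of_mem_degreeLE hs haN]
  obtain ⟨e, he, hce⟩ := hreg.exists_homogeneous_eq_sub_transpose_mulVec hx
    (fun i => homogeneousPart_homogeneousPart _ _) hcx
  have he' : ∀ i j, (e - eᵀ) i j ∈ degreeLE 𝒜 (N - k i - k j) := fun i j => by
    rw [Matrix.sub_apply, transpose_apply]
    exact sub_mem (he i j) (by rw [sub_right_comm]; exact he j i)
  refine ⟨b - (e - eᵀ) *ᵥ y, fun i => ?_, ?_⟩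
  · have hsplit : (b - (e - eᵀ) *ᵥ y) i = (b i - c i) - ∑ j, (e - eᵀ) i j * (y j - x j) := by
      have hci : c i = ∑ j, (e - eᵀ) i j * x j := congrFun hce i
      rw [hci]
      simp only [Pi.sub_apply, mulVec, dotProduct, mul_sub, Finset.sum_sub_distrib]
      ring
    rw [hsplit]
    refine sub_mem (degreeLE_mono (by omega) (sub_homogeneousPart_mem_degreeLE (hb i)))
      (sum_mem fun j _ => degreeLE_mono ?_ (mul_mem_degreeLE (he' i j) (hxy j)))
    omega
  · rw [sub_dotProduct, hbs, dotProduct_comm, dotProduct_sub_transpose_mulVec_self, sub_zero]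

theorem exists_dotProduct_eq_of_mem_degreeLE {l : ℕ} {x y : Fin l → R} {k : Fin l → ℕ}
    (hx : ∀ i, x i ∈ 𝒜 (k i)) (hxy : ∀ i, y i - x i ∈ degreeLE 𝒜 (k i - 1))
    (hreg : IsRegularSeq (List.ofFn x)) {a : ℤ} {s : R} (hs : s ∈ degreeLE 𝒜 a)
    (hsy : s ∈ Ideal.span (Set.range y)) :
    ∃ b : Fin l → R, (∀ i, b i ∈ degreeLE 𝒜 (a - k i)) ∧ b ⬝ᵥ y = s := by
  obtain ⟨b, hbs⟩ := Ideal.mem_span_range_iff_exists_fun.mp hsy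
  obtain ⟨M, hM⟩ : ∃ M : ℕ, ∀ i, b i ∈ degreeLE 𝒜 (a + M - k i) := by
    choose m hm using fun i => exists_mem_degreeLE (𝒜 := 𝒜) (b i)
    refine ⟨∑ i, (m i + k i) + a.natAbs, fun i => degreeLE_mono ?_ (hm i)⟩
    have := Finset.single_le_sum (f := fun i => m i + k i) (fun _ _ => Nat.zero_le _)
      (Finset.mem_univ i)
    push_cast at this ⊢
    linarith [neg_abs_le a]
  induction M generalizing b with
  | zero => exact ⟨b, fun i => by simpa using hM i, hbs⟩
  | succ M ih =>
    obtain ⟨b', hb', hb's⟩ := exists_lower_degree_dotProduct_eq hx hxy hreg hs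
      (by omega : a < a + (M + 1 : ℕ)) hM hbs
    exact ih b' hb's fun i => by convert hb' i using 2; push_cast; ring

theorem mem_span_of_sub_mem_span {l : ℕ} {x y : Fin l → R} {k : Fin l → ℕ}
    (hx : ∀ i, x i ∈ 𝒜 (k i)) (hxy : ∀ i, y i - x i ∈ degreeLE 𝒜 (k i - 1))
    (hreg : IsRegularSeq (List.ofFn x)) {a : ℕ} {w z : R} (hw : w ∈ 𝒜 a)
    (hz : z ∈ degreeLE 𝒜 (a - 1)) (hwz : w - z ∈ Ideal.span (Set.range y)) :
    w ∈ Ideal.span (Set.range x) := by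
  have hs : w - z ∈ degreeLE 𝒜 a := sub_mem (mem_degreeLE_of_mem hw) (degreeLE_mono (by omega) hz)
  obtain ⟨b, hb, hbs⟩ := exists_dotProduct_eq_of_mem_degreeLE hx hxy hreg hs hwz
  refine Ideal.mem_span_range_iff_exists_fun.mpr ⟨fun i => homogeneousPart 𝒜 (a - k i) (b i), ?_⟩
  calc _ = homogeneousPart 𝒜 a (b ⬝ᵥ y) :=
        (homogeneousPart_dotProduct_of_mem_degreeLE hx hxy hb).symm
    _ = w := by
      rw [hbs, map_sub, homogeneousPart_of_mem hw,
        homogeneousPart_eq_zero_of_mem_degreeLE hz (by omega), sub_zero]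

theorem exists_sub_mem_span_of_mem_span {ι : Type*} [Fintype ι] {x y : ι → R} {k : ι → ℕ}
    (hx : ∀ i, x i ∈ 𝒜 (k i)) (hxy : ∀ i, y i - x i ∈ degreeLE 𝒜 (k i - 1)) {a : ℕ} {w : R}
    (hw : w ∈ 𝒜 a) (hwx : w ∈ Ideal.span (Set.range x)) :
    ∃ z ∈ degreeLE 𝒜 (a - 1), w - z ∈ Ideal.span (Set.range y) := by
  obtain ⟨c, hc⟩ := Ideal.mem_span_range_iff_exists_fun.mp hwx
  set c' : ι → R := fun i => homogeneousPart 𝒜 (a - k i) (c i)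
  have hw' : w = c' ⬝ᵥ x := by
    rw [← homogeneousPart_of_mem hw, ← hc, map_sum]
    exact Finset.sum_congr rfl fun i _ => homogeneousPart_mul_of_mem (hx i) _ _
  refine ⟨c' ⬝ᵥ (x - y), sum_mem fun i _ => ?_, ?_⟩
  · have hyx : x i - y i ∈ degreeLE 𝒜 (k i - 1) := neg_sub (y i) (x i) ▸ neg_mem (hxy i)
    exact degreeLE_mono (by omega) (mul_mem_degreeLE (homogeneousPart_mem_degreeLE _ _) hyx)
  · rw [hw', dotProduct_sub, sub_sub_cancel]
    exact Ideal.mem_span_range_iff_exists_fun.mpr ⟨c', rfl⟩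

end GradedSyzygies

theorem stmt_5 {R : Type*} [CommRing R] (𝒜 : ℕ → AddSubgroup R) [GradedRing 𝒜]
    (n : ℕ) (x y : Fin n → R) (k : Fin n → ℕ)
    (hx : ∀ i, x i ∈ 𝒜 (k i))
    (hxy : ∀ i, Fmem 𝒜 ((k i : ℤ) - 1) (y i - x i))
    (hreg : ∀ l : List R, l.Perm (List.ofFn x) → IsRegularSeq l)
    (l : ℕ) (hl : l ≤ n) (a : ℕ) :
    (∀ z : R, Fmem 𝒜 (a : ℤ) z →
      ∃ w ∈ 𝒜 a, ∃ z' : R, Fmem 𝒜 ((a : ℤ) - 1) z' ∧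
        z - w - z' ∈ Ideal.span (Set.range fun i : Fin l => y (Fin.castLE hl i))) ∧
    (∀ w : R, w ∈ 𝒜 a →
      ((∃ z' : R, Fmem 𝒜 ((a : ℤ) - 1) z' ∧
          w - z' ∈ Ideal.span (Set.range fun i : Fin l => y (Fin.castLE hl i))) ↔
        w ∈ Ideal.span (Set.range fun i : Fin l => x (Fin.castLE hl i)))) := by
  have hregl : IsRegularSeq (List.ofFn (Fin.take l hl x)) :=
    (hreg _ (List.Perm.refl _)).ofFn_take hl
  refine ⟨fun z hz => ?_, fun w hw => ⟨fun ⟨z', hz', hwz⟩ => ?_, fun hwx => ?_⟩⟩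
  · exact ⟨homogeneousPart 𝒜 a z, homogeneousPart_natCast_mem a z, _,
      sub_homogeneousPart_mem_degreeLE hz, by simp⟩
  · exact mem_span_of_sub_mem_span (fun i => hx _) (fun i => hxy _) hregl hw hz' hwz
  · exact exists_sub_mem_span_of_mem_span (fun i => hx _) (fun i => hxy _) hw hwx
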